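/- Let N be a positive integer with N ≠ 0, N' a positive integer, and a, b, d complex numbers (such that no denominator parameter is a nonpositive integer within the range of summation). Then Σ_{m=0}^{N} Σ_{n=0}^{N'} (a)_m(b)_m(-N)_m (d-a)_n(d-b)_n(-N')_n / ((d)_{m+n}(1+a+b-N-d)_m(1-N-N')_n m! n!) = (d-a)_{N+N'} (d-b)_{N+N'} / ((d)_{N+N'} (d-a-b)_N (N)_{N'}). -/
import Mathlib

set_option maxHeartbeats 1000000

open Complex Finset

/-- Pochhammer symbol `(a)_k = a(a+1)⋯(a+k-1)`. -/
noncomputable def poch (a : ℂ) (k : ℕ) : ℂ := ∏ i ∈ Finset.range k, (a + i)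

/-- `z` is not a nonpositive integer. -/
def notNonposInt (z : ℂ) : Prop := ∀ k : ℕ, z ≠ -(k : ℂ)

@[simp] lemma poch_zero (a : ℂ) : poch a 0 = 1 := by simp [poch]

lemma poch_succ (a : ℂ) (k : ℕ) : poch a (k+1) = poch a k * (a + k) := by
  simp [poch, Finset.prod_range_succ]

lemma poch_succ' (a : ℂ) (k : ℕ) : poch a (k+1) = a * poch (a+1) k := by
  have h := Finset.prod_range_succ' (fun i => a + (i:ℂ)) k
  simp only [poch] at *
  rw [h, mul_comm]
  simp only [Nat.cast_zero, add_zero]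
  congr 1
  refine Finset.prod_congr rfl fun i _ => ?_
  push_cast; ring

lemma poch_add (a : ℂ) (m n : ℕ) : poch a (m + n) = poch a m * poch (a + m) n := by
  induction n with
  | zero => simp
  | succ n ih =>
      rw [show m + (n+1) = (m+n)+1 from rfl, poch_succ, ih, poch_succ]
      push_cast; ring

lemma poch_one_eq_factorial (k : ℕ) : poch 1 k = (k.factorial : ℂ) := by
  induction k with
  | zero => simp
  | succ k ih => rw [poch_succ, ih]; push_cast [Nat.factorial_succ]; ring

lemma poch_reverse (x : ℂ) (M : ℕ) : poch x M = (-1)^M * poch (1 - x - M) M := by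
  rw [poch, poch, ← Finset.prod_range_reflect]
  rw [show ((-1:ℂ))^M = ∏ _i ∈ Finset.range M, (-1) by simp, ← Finset.prod_mul_distrib]
  refine Finset.prod_congr rfl fun i hi => ?_
  rw [Finset.mem_range] at hi
  have h2 : M - 1 - i = M - (i+1) := by omega
  have h3 : ((M - (i+1) : ℕ) : ℂ) = (M:ℂ) - (i+1) := by
    push_cast [Nat.cast_sub hi]; ring
  rw [h2, h3]; push_cast; ring

lemma poch_neg_nat (K m : ℕ) : poch (-(K:ℂ)) m = (-1)^m * (K.descFactorial m : ℂ) := by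
  induction m with
  | zero => simp
  | succ m ih =>
      rw [poch_succ, ih, Nat.descFactorial_succ, Nat.cast_mul]
      rcases le_or_gt K m with h | h
      · rw [Nat.sub_eq_zero_of_le h]
        rcases lt_or_eq_of_le h with h' | h'
        · rw [Nat.descFactorial_eq_zero_iff_lt.mpr h']; simp
        · subst h'; push_cast; ring_nf
      · have h3 : ((K - m : ℕ) : ℂ) = (K:ℂ) - m := by push_cast [Nat.cast_sub h.le]; ring
        rw [h3]; push_cast; ring

lemma poch_vandermonde (L : ℕ) (X W : ℂ) :
    poch (X + W) L = ∑ j ∈ Finset.range (L+1), (L.choose j : ℂ) * poch X j * poch W (L - j) := by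
  induction L with
  | zero => simp [poch_zero]
  | succ L ih =>
      set u : ℕ → ℂ := fun j => (L.choose j : ℂ) * poch X j * poch W (L - j) with hu
      have claimB : (∑ j ∈ Finset.range (L+1), (L.choose (j+1) : ℂ) * poch X (j+1) * poch W (L-j))
          + poch W (L+1) = ∑ j ∈ Finset.range (L+1), u j * (W + ((L-j : ℕ):ℂ)) := by
        have e1 : ∑ i ∈ Finset.range (L+2), (L.choose i : ℂ) * poch X i * poch W (L+1-i)
            = (∑ j ∈ Finset.range (L+1), (L.choose (j+1) : ℂ) * poch X (j+1) * poch W (L+1-(j+1)))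
              + (L.choose 0 : ℂ) * poch X 0 * poch W (L+1) := Finset.sum_range_succ' _ (L+1)
        have e2 : ∑ i ∈ Finset.range (L+2), (L.choose i : ℂ) * poch X i * poch W (L+1-i)
            = ∑ i ∈ Finset.range (L+1), u i * (W + ((L-i : ℕ):ℂ)) := by
          rw [Finset.sum_range_succ, Nat.choose_succ_self]
          simp only [Nat.cast_zero, zero_mul, add_zero]
          refine Finset.sum_congr rfl fun i hi => ?_
          rw [Finset.mem_range] at hi
          have h1 : L+1-i = (L-i)+1 := by omega
          rw [h1, poch_succ, hu]; ring
        rw [e2] at e1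
        have e3 : ∀ j ∈ Finset.range (L+1), (L.choose (j+1) : ℂ) * poch X (j+1) * poch W (L+1-(j+1))
            = (L.choose (j+1) : ℂ) * poch X (j+1) * poch W (L-j) := by
          intro j hj; rw [Finset.mem_range] at hj
          congr 2
          omega
        rw [Finset.sum_congr rfl e3] at e1
        simp only [Nat.choose_zero_right, Nat.cast_one, poch_zero, one_mul, mul_one] at e1
        rw [e1]
      have peel : ∑ j ∈ Finset.range (L+2), ((L+1).choose j : ℂ) * poch X j * poch W (L+1-j)
          = (∑ j ∈ Finset.range (L+1), ((L+1).choose (j+1) : ℂ) * poch X (j+1) * poch W (L+1-(j+1)))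
            + ((L+1).choose 0 : ℂ) * poch X 0 * poch W (L+1) := Finset.sum_range_succ' _ (L+1)
      rw [peel]
      have expand : ∀ j ∈ Finset.range (L+1),
          ((L+1).choose (j+1) : ℂ) * poch X (j+1) * poch W (L+1-(j+1))
          = u j * (X + j) + (L.choose (j+1) : ℂ) * poch X (j+1) * poch W (L-j) := by
        intro j hj; rw [Finset.mem_range] at hj
        have h1 : (L+1) - (j+1) = L - j := by omega
        rw [h1, Nat.choose_succ_succ, Nat.cast_add, poch_succ, hu]
        ring
      rw [Finset.sum_congr rfl expand, Finset.sum_add_distrib]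
      simp only [Nat.choose_zero_right, Nat.cast_one, poch_zero, one_mul, mul_one]
      rw [add_assoc, claimB, ← Finset.sum_add_distrib, poch_succ, ih, Finset.sum_mul]
      refine Finset.sum_congr rfl fun j hj => ?_
      rw [Finset.mem_range] at hj
      have h1 : ((L-j : ℕ):ℂ) = (L:ℂ) - j := by
        push_cast [Nat.cast_sub (by omega : j ≤ L)]; ring
      rw [h1, hu]; ring

-- falling Vandermonde (complex z)
lemma poch_fv (L : ℕ) (Y z : ℂ) :
    poch (Y + z) L = ∑ j ∈ Finset.range (L+1),
      (L.choose j : ℂ) * (-1)^j * poch (-z) j * poch (Y + j) (L - j) := by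
  rw [poch_reverse (Y+z) L]
  have h1 : 1 - (Y+z) - L = (-z) + (1 - Y - L) := by ring
  rw [h1, poch_vandermonde L (-z) (1 - Y - L), Finset.mul_sum]
  refine Finset.sum_congr rfl fun j hj => ?_
  rw [Finset.mem_range] at hj
  have h2 : poch (1 - Y - L) (L - j) = (-1)^(L-j) * poch (Y + j) (L - j) := by
    rw [poch_reverse (1 - Y - L) (L-j)]
    have h3 : 1 - (1 - Y - (L:ℂ)) - ((L-j : ℕ):ℂ) = Y + j := by
      push_cast [Nat.cast_sub (by omega : j ≤ L)]; ring
    rw [h3]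
  rw [h2]
  have h4 : ((-1:ℂ))^L = (-1)^(L-j) * (-1)^j := by
    rw [← pow_add]
    congr 1
    omega
  rw [h4]
  have h6 : ((-1:ℂ))^(L-j) * (-1)^(L-j) = 1 := by
    rw [← pow_add]
    exact Even.neg_one_pow ⟨L-j, by ring⟩
  linear_combination (↑(L.choose j) * poch (-z) j * poch (Y + ↑j) (L - j) * (-1:ℂ)^j) * h6

lemma saal_scalar (K j : ℕ) (hj : j ≤ K) (x y c : ℂ) :
    (((K+1).choose (j+1) : ℕ) : ℂ)*(c+K)*((1+x+y-K-c)-1+(j+1))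
      + ((K.choose (j+1) : ℕ) : ℂ)*(c-x+K)*(c-y+K)
    = ((K.choose (j+1) : ℕ) : ℂ)*(x+(j+1))*(y+(j+1))
      + ((K.choose j : ℕ) : ℂ)*(c+j)*((1+x+y-K-c)+j) := by
  have hP : (((K+1).choose (j+1) : ℕ) : ℂ) = (K.choose j : ℕ) + (K.choose (j+1) : ℕ) := by
    exact_mod_cast congrArg (Nat.cast (R := ℂ)) (Nat.choose_succ_succ K j)
  have hR : ((K.choose (j+1) : ℕ) : ℂ) * (j+1) = ((K.choose j : ℕ) : ℂ) * ((K:ℂ) - j) := by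
    have h1 := Nat.choose_succ_right_eq K j
    have h2 : ((K - j : ℕ):ℂ) = (K:ℂ) - j := by push_cast [Nat.cast_sub hj]; ring
    calc ((K.choose (j+1) : ℕ) : ℂ) * (j+1) = ((K.choose (j+1) * (j+1) : ℕ) : ℂ) := by push_cast; ring
    _ = ((K.choose j * (K - j) : ℕ) : ℂ) := by exact_mod_cast congrArg (Nat.cast (R := ℂ)) h1
    _ = ((K.choose j : ℕ) : ℂ) * ((K:ℂ) - j) := by push_cast [h2]; ring
  rw [hP]
  linear_combination (-((1+x+y-(K:ℂ)-c)+j))*hR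

lemma saal (K : ℕ) (x y c : ℂ) :
    ∑ m ∈ Finset.range (K+1), (-1)^m * (K.choose m : ℂ) * poch x m * poch y m
      * poch (c+m) (K-m) * poch (1+x+y-K-c+m) (K-m)
    = (-1)^K * poch (c-x) K * poch (c-y) K := by
  induction K with
  | zero => simp [poch_zero]
  | succ K ih =>
      set w : ℂ := 1+x+y-K-c with hw
      set β : ℂ := (c-x+K)*(c-y+K) with hβ
      have hw' : (1:ℂ)+x+y-(K+1)-c = w - 1 := by rw [hw]; push_cast; ring
      -- h and Φ
      set h : ℕ → ℂ := fun i => (-1)^i * (K.choose i : ℂ) * poch x (i+1) * poch y (i+1)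
        * poch (c+i) (K-i) * poch (w+i) (K-i) with hh
      set Φ : ℕ → ℂ := fun i => Nat.casesOn i 0 h with hΦ
      have key : ∀ m ∈ Finset.range (K+2),
          (-1)^m * ((K+1).choose m : ℂ) * poch x m * poch y m
            * poch (c+m) (K+1-m) * poch ((1:ℂ)+x+y-(K+1)-c+m) (K+1-m)
          + β * ((-1)^m * (K.choose m : ℂ) * poch x m * poch y m
            * poch (c+m) (K-m) * poch (w+m) (K-m))
          = Φ (m+1) - Φ m := by
        intro m hm
        rw [Finset.mem_range] at hm
        match m with
        | 0 =>
            show (-1)^0 * (((K+1).choose 0 : ℕ):ℂ) * poch x 0 * poch y 0 * poch (c+(0:ℕ)) (K+1-0)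
              * poch ((1:ℂ)+x+y-(K+1)-c+(0:ℕ)) (K+1-0)
              + β * ((-1)^0 * ((K.choose 0 : ℕ):ℂ) * poch x 0 * poch y 0 * poch (c+(0:ℕ)) (K-0) * poch (w+(0:ℕ)) (K-0))
              = h 0 - 0
            rw [hw']
            simp only [pow_zero, Nat.choose_zero_right, Nat.cast_one, poch_zero, one_mul, mul_one,
              Nat.cast_zero, add_zero, Nat.sub_zero, sub_zero]
            rw [hh]
            simp only [pow_zero, Nat.choose_zero_right, Nat.cast_one, one_mul, Nat.cast_zero, add_zero]
            rw [Nat.sub_zero, poch_succ c K, poch_succ' (w-1) K, poch_succ x 0, poch_succ y 0]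
            simp only [poch_zero, one_mul, Nat.cast_zero, add_zero]
            rw [show w - 1 + 1 = w by ring, hβ, hw]
            ring
        | (j+1) =>
            have hjK : j ≤ K := by omega
            rcases Nat.lt_or_ge j K with hj | hj
            · -- j+1 ≤ K
              have hr : K - j = (K - (j+1)) + 1 := by omega
              have hr' : K + 1 - (j+1) = (K - (j+1)) + 1 := by omega
              set r : ℕ := K - (j+1) with hrr
              show (-1)^(j+1) * (((K+1).choose (j+1) : ℕ):ℂ) * poch x (j+1) * poch y (j+1)
                  * poch (c+(j+1:ℕ)) (K+1-(j+1)) * poch ((1:ℂ)+x+y-(K+1)-c+(j+1:ℕ)) (K+1-(j+1))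
                + β * ((-1)^(j+1) * ((K.choose (j+1) : ℕ):ℂ) * poch x (j+1) * poch y (j+1)
                  * poch (c+(j+1:ℕ)) (K-(j+1)) * poch (w+(j+1:ℕ)) (K-(j+1)))
                = h (j+1) - h j
              rw [hw', hh]
              simp only []
              rw [hr', hr]
              have e1 : poch (c+(j+1:ℕ)) (r+1) = poch (c+(j+1:ℕ)) r * (c+K) := by
                rw [poch_succ]
                congr 1
                push_cast [hrr, Nat.cast_sub (by omega : j+1 ≤ K)]
                ring
              have e2 : poch (w-1+(j+1:ℕ)) (r+1) = (w-1+(j+1:ℕ)) * poch (w+(j+1:ℕ)) r := by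
                rw [poch_succ']
                congr 1
                push_cast; ring
              have e3 : poch (c+(j:ℕ)) (r+1) = (c+j) * poch (c+(j+1:ℕ)) r := by
                rw [poch_succ']
                congr 1
                push_cast; ring
              have e4 : poch (w+(j:ℕ)) (r+1) = (w+j) * poch (w+(j+1:ℕ)) r := by
                rw [poch_succ']
                congr 1
                push_cast; ring
              have e5 : poch x (j+1+1) = poch x (j+1) * (x+(j+1)) := by
                rw [poch_succ]; push_cast; ring
              have e6 : poch y (j+1+1) = poch y (j+1) * (y+(j+1)) := by
                rw [poch_succ]; push_cast; ring
              rw [e1, e2, e3, e4, e5, e6]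
              have scalar := saal_scalar K j hjK x y c
              have hsign : ((-1:ℂ))^(j+1) = -(-1)^j := by rw [pow_succ]; ring
              rw [hβ]
              calc _ = ((-1)^(j+1) * poch x (j+1) * poch y (j+1) * poch (c+(j+1:ℕ)) r * poch (w+(j+1:ℕ)) r)
                    * ( (((K+1).choose (j+1) : ℕ):ℂ)*(c+K)*((1+x+y-(K:ℂ)-c)-1+(j+1))
                        + ((K.choose (j+1) : ℕ):ℂ)*(c-x+K)*(c-y+K) ) := by
                    rw [hw]; push_cast; ring
                _ = ((-1)^(j+1) * poch x (j+1) * poch y (j+1) * poch (c+(j+1:ℕ)) r * poch (w+(j+1:ℕ)) r)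
                    * ( ((K.choose (j+1) : ℕ):ℂ)*(x+(j+1))*(y+(j+1))
                        + ((K.choose j : ℕ):ℂ)*(c+j)*((1+x+y-(K:ℂ)-c)+j) ) := by rw [scalar]
                _ = _ := by rw [hsign, hw]; push_cast; ring
            · -- j = K
              have hjeq : j = K := le_antisymm hjK hj
              subst hjeq
              show (-1)^(j+1) * (((j+1).choose (j+1) : ℕ):ℂ) * poch x (j+1) * poch y (j+1)
                  * poch (c+(j+1:ℕ)) (j+1-(j+1)) * poch ((1:ℂ)+x+y-(j+1)-c+(j+1:ℕ)) (j+1-(j+1))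
                + β * ((-1)^(j+1) * ((j.choose (j+1) : ℕ):ℂ) * poch x (j+1) * poch y (j+1)
                  * poch (c+(j+1:ℕ)) (j-(j+1)) * poch (w+(j+1:ℕ)) (j-(j+1)))
                = h (j+1) - h j
              have hz : j - (j+1) = 0 := by omega
              rw [hh, hz]
              simp only [Nat.choose_succ_self, Nat.choose_self, Nat.sub_self, Nat.cast_zero,
                Nat.cast_one, CharP.cast_eq_zero, poch_zero, mul_one, one_mul, zero_mul,
                mul_zero, add_zero]
              rw [pow_succ]
              ring
      have tele : ∑ m ∈ Finset.range (K+2), (Φ (m+1) - Φ m) = Φ (K+2) - Φ 0 :=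
        Finset.sum_range_sub Φ (K+2)
      have hΦtop : Φ (K+2) = 0 := by
        show h (K+1) = 0
        rw [hh]
        simp [Nat.choose_succ_self]
      have hsum2 : ∑ m ∈ Finset.range (K+2),
          ((-1)^m * (K.choose m : ℂ) * poch x m * poch y m * poch (c+m) (K-m) * poch (w+m) (K-m))
          = ∑ m ∈ Finset.range (K+1),
          ((-1)^m * (K.choose m : ℂ) * poch x m * poch y m * poch (c+m) (K-m) * poch (w+m) (K-m)) := by
        rw [Finset.sum_range_succ, Nat.choose_succ_self]
        simp
      have main : ∑ m ∈ Finset.range (K+2),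
          ((-1)^m * ((K+1).choose m : ℂ) * poch x m * poch y m
            * poch (c+m) (K+1-m) * poch ((1:ℂ)+x+y-(K+1)-c+m) (K+1-m))
          + β * ∑ m ∈ Finset.range (K+1),
          ((-1)^m * (K.choose m : ℂ) * poch x m * poch y m * poch (c+m) (K-m) * poch (w+m) (K-m)) = 0 := by
        rw [← hsum2, Finset.mul_sum, ← Finset.sum_add_distrib]
        rw [Finset.sum_congr rfl key, tele, hΦtop]
        simp [hΦ]
      rw [ih] at main
      have expand : ((-1:ℂ))^(K+1) * poch (c-x) (K+1) * poch (c-y) (K+1)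
          = -β * ((-1)^K * poch (c-x) K * poch (c-y) K) := by
        rw [poch_succ (c-x) K, poch_succ (c-y) K, pow_succ, hβ]
        ring
      rw [expand]
      have cast1 : ((K+1 : ℕ):ℂ) = (K:ℂ)+1 := by push_cast; ring
      rw [cast1]
      linear_combination main

lemma prod_sub_prod (L : ℕ) (f g : ℕ → ℂ) :
    (∏ i ∈ Finset.range L, f i) - (∏ i ∈ Finset.range L, g i)
    = ∑ s ∈ Finset.range L, (∏ i ∈ Finset.range s, f i) * (f s - g s) * (∏ i ∈ Finset.Ico (s+1) L, g i) := by
  induction L with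
  | zero => simp
  | succ L ih =>
      rw [Finset.prod_range_succ, Finset.prod_range_succ, Finset.sum_range_succ]
      have e1 : ∀ s ∈ Finset.range L,
          (∏ i ∈ Finset.range s, f i) * (f s - g s) * (∏ i ∈ Finset.Ico (s+1) (L+1), g i)
          = (∏ i ∈ Finset.range s, f i) * (f s - g s) * (∏ i ∈ Finset.Ico (s+1) L, g i) * g L := by
        intro s hs
        rw [Finset.mem_range] at hs
        rw [Finset.prod_Ico_succ_top (by omega : s+1 ≤ L)]
        ring
      rw [Finset.sum_congr rfl e1, ← Finset.sum_mul, ← ih]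
      rw [Finset.Ico_self, Finset.prod_empty]
      ring

lemma fd_vanish : ∀ (L N : ℕ), L < N → ∀ (c : ℕ → ℂ),
    ∑ j ∈ Finset.range (N+1), (-1)^j * (N.choose j : ℂ) * (∏ i ∈ Finset.range L, (c i - j)) = 0 := by
  intro L
  induction L with
  | zero =>
      intro N hN c
      simp only [Finset.range_zero, Finset.prod_empty, mul_one]
      have h := Int.alternating_sum_range_choose (n := N)
      rw [if_neg (by omega)] at h
      have h2 : ((∑ i ∈ Finset.range (N+1), ((-1)^i * (N.choose i : ℤ)) : ℤ) : ℂ) = ((0:ℤ):ℂ) := by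
        exact_mod_cast congrArg (fun z : ℤ => (z : ℂ)) h
      push_cast at h2
      convert h2 using 2
  | succ L ih =>
      intro N hN c
      obtain ⟨M, rfl⟩ : ∃ M, N = M + 1 := ⟨N - 1, by omega⟩
      have hLM : L < M := by omega
      set P : ℕ → ℂ := fun j => ∏ i ∈ Finset.range (L+1), (c i - j) with hP
      have peel : ∀ (q : ℕ → ℂ), ∑ i ∈ Finset.range (M+2), q i
          = (∑ j ∈ Finset.range (M+1), q (j+1)) + q 0 := fun q => Finset.sum_range_succ' q (M+1)
      have e3 : ∑ j ∈ Finset.range (M+1), (-1:ℂ)^j * (M.choose (j+1) : ℂ) * P (j+1)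
          = -(∑ i ∈ Finset.range (M+1), (-1:ℂ)^i * (M.choose i : ℂ) * P i) + P 0 := by
        have e4 : ∑ i ∈ Finset.range (M+2), (-1:ℂ)^i * (M.choose i : ℂ) * P i
            = (∑ j ∈ Finset.range (M+1), (-1:ℂ)^(j+1) * (M.choose (j+1) : ℂ) * P (j+1)) + P 0 := by
          rw [peel]; simp
        have e5 : ∑ i ∈ Finset.range (M+2), (-1:ℂ)^i * (M.choose i : ℂ) * P i
            = ∑ i ∈ Finset.range (M+1), (-1:ℂ)^i * (M.choose i : ℂ) * P i := by
          rw [Finset.sum_range_succ, Nat.choose_succ_self]; simp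
        have e6 : ∑ j ∈ Finset.range (M+1), (-1:ℂ)^(j+1) * (M.choose (j+1) : ℂ) * P (j+1)
            = -∑ j ∈ Finset.range (M+1), (-1:ℂ)^j * (M.choose (j+1) : ℂ) * P (j+1) := by
          rw [← Finset.sum_neg_distrib]
          refine Finset.sum_congr rfl fun j hj => ?_
          rw [pow_succ]; ring
        rw [e5, e6] at e4
        linear_combination e4
      have step1 : ∑ j ∈ Finset.range (M+2), (-1)^j * ((M+1).choose j : ℂ) * P j
          = ∑ j ∈ Finset.range (M+1), (-1)^j * (M.choose j : ℂ) * (P j - P (j+1)) := by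
        rw [peel]
        simp only [Nat.choose_zero_right, Nat.cast_one, pow_zero, one_mul, mul_one]
        have e2 : ∀ j ∈ Finset.range (M+1), (-1:ℂ)^(j+1) * ((M+1).choose (j+1) : ℂ) * P (j+1)
            = -((-1)^j * (M.choose j : ℂ) * P (j+1)) - (-1)^j * (M.choose (j+1) : ℂ) * P (j+1) := by
          intro j hj
          rw [Nat.choose_succ_succ, Nat.cast_add, pow_succ]
          ring
        rw [Finset.sum_congr rfl e2, Finset.sum_sub_distrib, Finset.sum_neg_distrib]
        have e7 : ∑ j ∈ Finset.range (M+1), (-1:ℂ)^j * (M.choose j : ℂ) * (P j - P (j+1))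
            = (∑ j ∈ Finset.range (M+1), (-1:ℂ)^j * (M.choose j : ℂ) * P j)
              - ∑ j ∈ Finset.range (M+1), (-1:ℂ)^j * (M.choose j : ℂ) * P (j+1) := by
          rw [← Finset.sum_sub_distrib]
          refine Finset.sum_congr rfl fun j hj => by ring
        rw [e7, e3]
        ring
      rw [step1]
      -- expand P j - P (j+1) via prod_sub_prod
      have diff : ∀ j : ℕ, P j - P (j+1)
          = ∑ s ∈ Finset.range (L+1), ∏ i ∈ Finset.range L,
              ((if i < s then c i else c (i+1) - 1) - (j:ℂ)) := by
        intro j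
        rw [hP]
        simp only []
        rw [prod_sub_prod L.succ (fun i => c i - j) (fun i => c i - ((j:ℕ)+1 : ℕ))]
        refine Finset.sum_congr rfl fun s hs => ?_
        rw [Finset.mem_range] at hs
        have hsL : s ≤ L := by omega
        have split : ∏ i ∈ Finset.range L, ((if i < s then c i else c (i+1) - 1) - (j:ℂ))
            = (∏ i ∈ Finset.range s, ((if i < s then c i else c (i+1) - 1) - (j:ℂ)))
              * ∏ i ∈ Finset.Ico s L, ((if i < s then c i else c (i+1) - 1) - (j:ℂ)) :=
          (Finset.prod_range_mul_prod_Ico _ hsL).symm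
        rw [split]
        have p1 : ∏ i ∈ Finset.range s, ((if i < s then c i else c (i+1) - 1) - (j:ℂ))
            = ∏ i ∈ Finset.range s, (c i - (j:ℂ)) := by
          refine Finset.prod_congr rfl fun i hi => ?_
          rw [Finset.mem_range] at hi
          rw [if_pos hi]
        have p2 : ∏ i ∈ Finset.Ico s L, ((if i < s then c i else c (i+1) - 1) - (j:ℂ))
            = ∏ i ∈ Finset.Ico (s+1) (L+1), (c i - (((j:ℕ)+1 : ℕ) : ℂ)) := by
          rw [Finset.prod_Ico_eq_prod_range, Finset.prod_Ico_eq_prod_range]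
          have hL : L - s = L + 1 - (s+1) := by omega
          rw [← hL]
          refine Finset.prod_congr rfl fun i hi => ?_
          rw [if_neg (by omega)]
          have : s + 1 + i = s + i + 1 := by omega
          rw [this]
          push_cast; ring
        rw [p1, p2]
        have fsgs : (fun i => c i - (j:ℂ)) s - (fun i => c i - (((j:ℕ)+1:ℕ):ℂ)) s = 1 := by
          simp only []
          push_cast; ring
        rw [fsgs]
        have : (((j:ℕ)+1 : ℕ) : ℂ) = ((j:ℂ)+1) := by push_cast; ring
        ring
      have ex : ∀ j ∈ Finset.range (M+1), (-1:ℂ)^j * (M.choose j : ℂ) * (P j - P (j+1))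
          = ∑ s ∈ Finset.range (L+1), (-1:ℂ)^j * (M.choose j : ℂ)
              * ∏ i ∈ Finset.range L, ((if i < s then c i else c (i+1) - 1) - (j:ℂ)) := by
        intro j hj
        rw [diff j, Finset.mul_sum]
      rw [Finset.sum_congr rfl ex, Finset.sum_comm]
      refine Finset.sum_eq_zero fun s hs => ?_
      exact ih M hLM (fun i => if i < s then c i else c (i+1) - 1)

lemma hk_vanish (N N' k : ℕ) (hN : 0 < N) (hk : k < N') :
    ∑ j ∈ Finset.range (N+1), (-1)^j * (N.choose j : ℂ) *
      (poch (-(N':ℂ)) (j+k) / poch (1-(N:ℂ)-(N':ℂ)) (j+k)) = 0 := by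
  have cast1 : (1:ℂ)-(N:ℂ)-(N':ℂ) = -(((N+N'-1 : ℕ)):ℂ) := by
    push_cast [Nat.cast_sub (show 1 ≤ N + N' by omega)]
    ring
  set κ : ℂ := (N'.factorial : ℂ) / ((N+N'-1).factorial : ℂ) with hκ
  have claim : ∀ j ∈ Finset.range (N+1),
      (-1:ℂ)^j * (N.choose j : ℂ) * (poch (-(N':ℂ)) (j+k) / poch (1-(N:ℂ)-(N':ℂ)) (j+k))
      = κ * ((-1:ℂ)^j * (N.choose j : ℂ) *
          ∏ i ∈ Finset.range (N-1), (((N:ℂ)+(N':ℂ)-1-(k:ℂ)-(i:ℂ)) - (j:ℂ))) := by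
    intro j hj
    rw [Finset.mem_range] at hj
    set s : ℕ := j + k with hs
    have hsle : s ≤ N + N' - 1 := by omega
    rw [cast1, poch_neg_nat N' s, poch_neg_nat (N+N'-1) s]
    have hne : ((-1:ℂ))^s ≠ 0 := pow_ne_zero _ (by norm_num)
    rw [mul_div_mul_left _ _ hne]
    rcases le_or_gt s N' with hsN | hsN
    · -- s ≤ N'
      have prod_eq : ∏ i ∈ Finset.range (N-1), (((N:ℂ)+(N':ℂ)-1-(k:ℂ)-(i:ℂ)) - (j:ℂ))
          = (((N+N'-1-s).descFactorial (N-1) : ℕ) : ℂ) := by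
        rw [Nat.descFactorial_eq_prod_range, Nat.cast_prod]
        refine Finset.prod_congr rfl fun i hi => ?_
        rw [Finset.mem_range] at hi
        have h1 : ((N+N'-1-s-i : ℕ) : ℂ) = ((N+N'-1:ℕ):ℂ) - (s:ℕ) - (i:ℕ) := by
          rw [Nat.cast_sub (show i ≤ N+N'-1-s by omega), Nat.cast_sub hsle]
        rw [h1, hs]
        push_cast [Nat.cast_sub (show 1 ≤ N + N' by omega)]
        ring
      rw [prod_eq]
      -- ℕ identity
      have natid : (N'.descFactorial s) * (N+N'-1).factorial
          = N'.factorial * ((N+N'-1).descFactorial s * ((N+N'-1-s).descFactorial (N-1))) := by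
        have A : (N+N'-1-s).descFactorial ((s+(N-1))-s) * (N+N'-1).descFactorial s
            = (N+N'-1).descFactorial (s+(N-1)) :=
          Nat.descFactorial_mul_descFactorial (Nat.le_add_right s (N-1))
        rw [show (s+(N-1))-s = N-1 by omega] at A
        have B : (N+N'-1-(s+(N-1))).factorial * (N+N'-1).descFactorial (s+(N-1))
            = (N+N'-1).factorial :=
          Nat.factorial_mul_descFactorial (show s+(N-1) ≤ N+N'-1 by omega)
        rw [show N+N'-1-(s+(N-1)) = N'-s by omega] at B
        have C : (N'-s).factorial * N'.descFactorial s = N'.factorial :=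
          Nat.factorial_mul_descFactorial hsN
        refine Nat.eq_of_mul_eq_mul_right (Nat.factorial_pos (N'-s)) ?_
        calc N'.descFactorial s * (N+N'-1).factorial * (N'-s).factorial
            = (N+N'-1).factorial * ((N'-s).factorial * N'.descFactorial s) := by ring
          _ = (N+N'-1).factorial * N'.factorial := by rw [C]
          _ = N'.factorial * ((N+N'-1-s).descFactorial (N-1) * (N+N'-1).descFactorial s) * (N'-s).factorial := by
              rw [A]
              calc (N+N'-1).factorial * N'.factorial
                  = N'.factorial * ((N+N'-1-(s+(N-1))).factorial * (N+N'-1).descFactorial (s+(N-1))) := by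
                    rw [show N+N'-1-(s+(N-1)) = N'-s by omega, B]; ring
                _ = N'.factorial * (N+N'-1).descFactorial (s+(N-1)) * (N'-s).factorial := by
                    rw [show N+N'-1-(s+(N-1)) = N'-s by omega]; ring
          _ = N'.factorial * ((N+N'-1).descFactorial s * ((N+N'-1-s).descFactorial (N-1))) * (N'-s).factorial := by
              ring
      -- now complex division
      have hden : (((N+N'-1).descFactorial s : ℕ) : ℂ) ≠ 0 :=
        Nat.cast_ne_zero.mpr (fun h => absurd (Nat.descFactorial_eq_zero_iff_lt.mp h) (by omega))
      have hfac : (((N+N'-1).factorial : ℕ) : ℂ) ≠ 0 :=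
        Nat.cast_ne_zero.mpr (Nat.factorial_ne_zero _)
      have natid2 : ((N'.descFactorial s * (N+N'-1).factorial : ℕ) : ℂ)
          = ((N'.factorial * ((N+N'-1).descFactorial s * ((N+N'-1-s).descFactorial (N-1))) : ℕ) : ℂ) := by
        exact_mod_cast congrArg (fun z : ℕ => (z:ℂ)) natid
      push_cast at natid2
      have hratio : ((N'.descFactorial s : ℕ) : ℂ) / (((N+N'-1).descFactorial s : ℕ) : ℂ)
          = ((N'.factorial : ℕ) : ℂ) / (((N+N'-1).factorial : ℕ) : ℂ)
            * (((N+N'-1-s).descFactorial (N-1) : ℕ) : ℂ) := by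
        rw [div_mul_eq_mul_div, div_eq_div_iff hden hfac]
        linear_combination natid2
      rw [hratio, hκ]
      ring
    · -- s > N'
      have hnum : (N'.descFactorial s : ℂ) = 0 := by
        rw [Nat.cast_eq_zero]
        exact Nat.descFactorial_eq_zero_iff_lt.mpr hsN
      rw [hnum, zero_div]
      have prod_zero : ∏ i ∈ Finset.range (N-1), (((N:ℂ)+(N':ℂ)-1-(k:ℂ)-(i:ℂ)) - (j:ℂ)) = 0 := by
        refine Finset.prod_eq_zero (Finset.mem_range.mpr (show N+N'-1-s < N-1 by omega)) ?_
        have h1 : ((N+N'-1-s : ℕ) : ℂ) = ((N:ℂ)+(N':ℂ)-1) - (s:ℕ) := by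
          rw [Nat.cast_sub hsle]
          push_cast [Nat.cast_sub (show 1 ≤ N + N' by omega)]
          ring
        rw [h1, hs]
        push_cast
        ring
      rw [prod_zero]
      ring
  rw [Finset.sum_congr rfl claim, ← Finset.mul_sum]
  rw [fd_vanish (N-1) N (by omega) (fun i => (N:ℂ)+(N':ℂ)-1-(k:ℂ)-(i:ℂ))]
  ring

lemma choose_trinomial (N m j : ℕ) (h : m + j ≤ N) :
    N.choose m * (N-m).choose j = N.choose j * (N-j).choose m := by
  have hm : m ≤ N := by omega
  have hj : j ≤ N := by omega
  have hjm : j ≤ N - m := by omega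
  have hmj : m ≤ N - j := by omega
  have key : ∀ u v : ℕ, u + v ≤ N →
      N.choose u * (N-u).choose v * (u.factorial * v.factorial * (N-u-v).factorial)
        = N.factorial := by
    intro u v huv
    have h1 := Nat.choose_mul_factorial_mul_factorial (show u ≤ N by omega)
    have h2 := Nat.choose_mul_factorial_mul_factorial (show v ≤ N - u by omega)
    calc N.choose u * (N-u).choose v * (u.factorial * v.factorial * (N-u-v).factorial)
        = (N.choose u * u.factorial) * ((N-u).choose v * v.factorial * ((N-u)-v).factorial) := by
          ring
      _ = (N.choose u * u.factorial) * (N-u).factorial := by rw [h2]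
      _ = N.factorial := by rw [← h1]
  have k1 := key m j h
  have k2 := key j m (by omega)
  have hsub : N - j - m = N - m - j := by omega
  rw [hsub] at k2
  have hpos : 0 < m.factorial * j.factorial * (N-m-j).factorial :=
    Nat.mul_pos (Nat.mul_pos m.factorial_pos j.factorial_pos) (N-m-j).factorial_pos
  have : N.choose m * (N-m).choose j * (m.factorial * j.factorial * (N-m-j).factorial)
      = N.choose j * (N-j).choose m * (m.factorial * j.factorial * (N-m-j).factorial) := by
    rw [k1]
    calc N.factorial = N.choose j * (N-j).choose m * (j.factorial * m.factorial * (N-m-j).factorial) := k2.symm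
      _ = N.choose j * (N-j).choose m * (m.factorial * j.factorial * (N-m-j).factorial) := by ring
  exact Nat.eq_of_mul_eq_mul_right hpos this

lemma gform (K n : ℕ) (α β δ : ℂ) :
    ∑ m ∈ Finset.range (K+1), (-1)^m * (K.choose m : ℂ) * poch α m * poch β m
      * poch (δ+m) (K-m) * poch (1+α+β-K-δ+n+m) (K-m)
    = ∑ j ∈ Finset.range (K+1), (K.choose j : ℂ) * (n.descFactorial j : ℂ)
        * poch (δ+((K-j : ℕ):ℂ)) j * (-1)^(K-j) * poch (δ-α) (K-j) * poch (δ-β) (K-j) := by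
  set w : ℂ := 1+α+β-K-δ with hw
  have expand : ∀ m ∈ Finset.range (K+1),
      (-1:ℂ)^m * (K.choose m : ℂ) * poch α m * poch β m
        * poch (δ+m) (K-m) * poch (w+n+m) (K-m)
      = ∑ j ∈ Finset.range (K+1), (-1:ℂ)^m * (K.choose m : ℂ) * ((K-m).choose j : ℂ)
          * (n.descFactorial j : ℂ) * poch α m * poch β m * poch (δ+m) (K-m)
          * poch (w+m+j) (K-m-j) := by
    intro m hm
    rw [Finset.mem_range] at hm
    have fv : poch (w+n+m) (K-m) = poch ((w+(m:ℂ)) + (n:ℂ)) (K-m) := by ring_nf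
    rw [fv, poch_fv (K-m) (w+m) (n:ℂ)]
    have ext : ∑ j ∈ Finset.range ((K-m)+1), ((K-m).choose j : ℂ) * (-1)^j * poch (-(n:ℂ)) j * poch ((w+(m:ℂ))+j) (K-m-j)
        = ∑ j ∈ Finset.range (K+1), ((K-m).choose j : ℂ) * (-1)^j * poch (-(n:ℂ)) j * poch ((w+(m:ℂ))+j) (K-m-j) := by
      refine Finset.sum_subset (Finset.range_subset_range.mpr (by omega)) ?_
      intro x hx1 hx2
      rw [Finset.mem_range] at hx2
      rw [Nat.choose_eq_zero_of_lt (by omega)]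
      simp
    rw [ext, Finset.mul_sum]
    refine Finset.sum_congr rfl fun j hj => ?_
    have sq : (-1:ℂ)^j * ((-1)^j * (n.descFactorial j : ℂ)) = (n.descFactorial j : ℂ) := by
      rw [← mul_assoc, ← pow_add]
      have : ((-1:ℂ))^(j+j) = 1 := Even.neg_one_pow ⟨j, by ring⟩
      rw [this, one_mul]
    have harg : poch ((w+(m:ℂ))+(j:ℂ)) (K-m-j) = poch (w+(m:ℂ)+(j:ℂ)) (K-m-j) := rfl
    calc (-1:ℂ)^m * (K.choose m : ℂ) * poch α m * poch β m * poch (δ+m) (K-m)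
          * (((K-m).choose j : ℂ) * (-1)^j * poch (-(n:ℂ)) j * poch ((w+(m:ℂ))+j) (K-m-j))
        = (-1:ℂ)^m * (K.choose m : ℂ) * poch α m * poch β m * poch (δ+m) (K-m)
          * (((K-m).choose j : ℂ) * ((-1:ℂ)^j * ((-1)^j * (n.descFactorial j : ℂ))) * poch ((w+(m:ℂ))+j) (K-m-j)) := by
          rw [poch_neg_nat n j]; ring
      _ = _ := by rw [sq]; ring
  rw [Finset.sum_congr rfl expand, Finset.sum_comm]
  refine Finset.sum_congr rfl fun j hj => ?_
  rw [Finset.mem_range] at hj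
  -- restrict m-sum to range (K-j+1)
  have restrict : ∑ m ∈ Finset.range (K+1), (-1:ℂ)^m * (K.choose m : ℂ) * ((K-m).choose j : ℂ)
        * (n.descFactorial j : ℂ) * poch α m * poch β m * poch (δ+m) (K-m) * poch (w+m+j) (K-m-j)
      = ∑ m ∈ Finset.range ((K-j)+1), (-1:ℂ)^m * (K.choose m : ℂ) * ((K-m).choose j : ℂ)
        * (n.descFactorial j : ℂ) * poch α m * poch β m * poch (δ+m) (K-m) * poch (w+m+j) (K-m-j) := by
    refine (Finset.sum_subset (Finset.range_subset_range.mpr (by omega)) ?_).symm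
    intro x hx1 hx2
    rw [Finset.mem_range] at hx1
    rw [Finset.mem_range] at hx2
    rw [Nat.choose_eq_zero_of_lt (show K - x < j by omega)]
    simp
  rw [restrict]
  have per_m : ∀ m ∈ Finset.range ((K-j)+1),
      (-1:ℂ)^m * (K.choose m : ℂ) * ((K-m).choose j : ℂ)
        * (n.descFactorial j : ℂ) * poch α m * poch β m * poch (δ+m) (K-m) * poch (w+m+j) (K-m-j)
      = ((K.choose j : ℂ) * (n.descFactorial j : ℂ) * poch (δ+((K-j : ℕ):ℂ)) j)
        * ((-1:ℂ)^m * (((K-j).choose m : ℕ) : ℂ) * poch α m * poch β m * poch (δ+m) ((K-j)-m)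
            * poch (1+α+β-((K-j:ℕ):ℂ)-δ+m) ((K-j)-m)) := by
    intro m hm
    rw [Finset.mem_range] at hm
    have hmj : m + j ≤ K := by omega
    have tri : (K.choose m : ℂ) * ((K-m).choose j : ℂ) = (K.choose j : ℂ) * ((K-j).choose m : ℂ) := by
      have := choose_trinomial K m j hmj
      exact_mod_cast congrArg (fun z : ℕ => (z : ℂ)) this
    have split : poch (δ+m) (K-m) = poch (δ+m) ((K-j)-m) * poch (δ+((K-j:ℕ):ℂ)) j := by
      have hlen : K - m = ((K-j)-m) + j := by omega
      rw [hlen, poch_add]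
      congr 2
      have : (((K-j)-m : ℕ) : ℂ) = ((K-j:ℕ):ℂ) - m := by
        push_cast [Nat.cast_sub (show m ≤ K - j by omega), Nat.cast_sub (show j ≤ K by omega)]
        ring
      rw [this]; ring
    have warg : poch (w+m+j) (K-m-j) = poch (1+α+β-((K-j:ℕ):ℂ)-δ+m) ((K-j)-m) := by
      have h1 : (1:ℂ)+α+β-((K-j:ℕ):ℂ)-δ+m = w+m+j := by
        rw [hw]
        push_cast [Nat.cast_sub (show j ≤ K by omega)]
        ring
      rw [h1]
      congr 1
      omega
    rw [split, warg]
    calc _ = ((K.choose m : ℂ) * ((K-m).choose j : ℂ)) * ((-1:ℂ)^m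
            * (n.descFactorial j : ℂ) * poch α m * poch β m * (poch (δ+m) ((K-j)-m) * poch (δ+((K-j:ℕ):ℂ)) j)
            * poch (1+α+β-((K-j:ℕ):ℂ)-δ+m) ((K-j)-m)) := by ring
      _ = _ := by rw [tri]; ring
  rw [Finset.sum_congr rfl per_m, ← Finset.mul_sum]
  rw [saal (K-j) α β δ]
  ring

lemma neg_one_pow_sub_c {j N : ℕ} (h : j ≤ N) : ((-1:ℂ))^(N-j) = (-1)^N * (-1)^j := by
  have h2 : ((-1:ℂ))^j * (-1)^j = 1 := by
    rw [← pow_add]; exact Even.neg_one_pow ⟨j, by ring⟩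
  have h1 : ((-1:ℂ))^(N-j) * ((-1)^j * (-1)^j) = (-1)^N * (-1)^j := by
    rw [← mul_assoc, ← pow_add]
    congr 2
    omega
  rw [h2, mul_one] at h1
  exact h1

lemma pp_eval (N N' : ℕ) (hN : 0 < N) (hN' : 0 < N') (a b d : ℂ) :
    ∑ m ∈ Finset.range (N+1), ∑ n ∈ Finset.range (N'+1),
      (-1)^m * (N.choose m : ℂ) * poch a m * poch b m * poch (d-a) n * poch (d-b) n
        * (poch (-(N':ℂ)) n / (poch (1-(N:ℂ)-(N':ℂ)) n * (n.factorial:ℂ)))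
        * poch (d+m+n) (N+N'-(m+n)) * poch (1+a+b-(N:ℂ)-d+m) (N-m)
    = (-1)^N * poch (d-a) (N+N') * poch (d-b) (N+N')
        * (poch (-(N':ℂ)) N' / (poch (1-(N:ℂ)-(N':ℂ)) N' * (N'.factorial:ℂ))) := by
  set γ : ℕ → ℂ := fun n => poch (-(N':ℂ)) n / (poch (1-(N:ℂ)-(N':ℂ)) n * (n.factorial:ℂ)) with hγ
  rw [Finset.sum_comm]
  -- Step 1: evaluate inner m-sum via gform
  have inner_eval : ∀ n ∈ Finset.range (N'+1),
      ∑ m ∈ Finset.range (N+1),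
        ((-1)^m * (N.choose m : ℂ) * poch a m * poch b m * poch (d-a) n * poch (d-b) n
          * γ n * poch (d+m+n) (N+N'-(m+n)) * poch (1+a+b-(N:ℂ)-d+m) (N-m))
      = ∑ j ∈ Finset.range (N+1),
          (poch (d-a) n * poch (d-b) n * γ n * poch (d+(N:ℂ)+(n:ℂ)) (N'-n))
          * ((N.choose j : ℂ) * (n.descFactorial j : ℂ)
            * poch ((d+(n:ℂ))+((N-j : ℕ):ℂ)) j * (-1)^(N-j)
            * poch ((d+(n:ℂ))-a) (N-j) * poch ((d+(n:ℂ))-b) (N-j)) := by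
    intro n hn
    rw [Finset.mem_range] at hn
    have permC2 : ∀ m ∈ Finset.range (N+1),
        (-1:ℂ)^m * (N.choose m : ℂ) * poch a m * poch b m * poch (d-a) n * poch (d-b) n
          * γ n * poch (d+m+n) (N+N'-(m+n)) * poch (1+a+b-(N:ℂ)-d+m) (N-m)
        = (poch (d-a) n * poch (d-b) n * γ n * poch (d+(N:ℂ)+(n:ℂ)) (N'-n))
          * ((-1)^m * (N.choose m : ℂ) * poch a m * poch b m * poch ((d+(n:ℂ))+m) (N-m)
            * poch (1+a+b-(N:ℂ)-(d+(n:ℂ))+n+m) (N-m)) := by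
      intro m hm
      rw [Finset.mem_range] at hm
      have hsplit : poch (d+(m:ℂ)+(n:ℂ)) (N+N'-(m+n))
          = poch (d+(m:ℂ)+(n:ℂ)) (N-m) * poch (d+(N:ℂ)+(n:ℂ)) (N'-n) := by
        rw [show N+N'-(m+n) = (N-m)+(N'-n) by omega, poch_add]
        have hbase : d+(m:ℂ)+(n:ℂ)+((N-m : ℕ):ℂ) = d+(N:ℂ)+(n:ℂ) := by
          rw [Nat.cast_sub (by omega : m ≤ N)]; ring
        rw [hbase]
      have harg1 : poch ((d+(n:ℂ))+(m:ℂ)) (N-m) = poch (d+(m:ℂ)+(n:ℂ)) (N-m) := by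
        rw [show (d+(n:ℂ))+(m:ℂ) = d+(m:ℂ)+(n:ℂ) by ring]
      have harg2 : (1:ℂ)+a+b-(N:ℂ)-(d+(n:ℂ))+n+m = 1+a+b-(N:ℂ)-d+m := by ring
      rw [hsplit, harg1, harg2]
      ring
    rw [Finset.sum_congr rfl permC2, ← Finset.mul_sum, gform N n a b (d+(n:ℂ)), Finset.mul_sum]
  rw [Finset.sum_congr rfl inner_eval]
  -- Step 2: massage each (n,j) term
  have mass : ∀ n ∈ Finset.range (N'+1), ∀ j ∈ Finset.range (N+1),
      (poch (d-a) n * poch (d-b) n * γ n * poch (d+(N:ℂ)+(n:ℂ)) (N'-n))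
        * ((N.choose j : ℂ) * (n.descFactorial j : ℂ)
          * poch ((d+(n:ℂ))+((N-j : ℕ):ℂ)) j * (-1)^(N-j)
          * poch ((d+(n:ℂ))-a) (N-j) * poch ((d+(n:ℂ))-b) (N-j))
      = (-1)^N * ((-1)^j * (N.choose j : ℂ) * (n.descFactorial j : ℂ) * γ n
          * poch (d-a) (n+(N-j)) * poch (d-b) (n+(N-j))
          * poch (d+((N-j : ℕ):ℂ)+(n:ℂ)) (j+(N'-n))) := by
    intro n hn j hj
    rw [Finset.mem_range] at hn hj
    have hja : poch (d-a) (n+(N-j)) = poch (d-a) n * poch ((d+(n:ℂ))-a) (N-j) := by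
      rw [poch_add]
      have : d-a+(n:ℂ) = (d+(n:ℂ))-a := by ring
      rw [this]
    have hjb : poch (d-b) (n+(N-j)) = poch (d-b) n * poch ((d+(n:ℂ))-b) (N-j) := by
      rw [poch_add]
      have : d-b+(n:ℂ) = (d+(n:ℂ))-b := by ring
      rw [this]
    have hjc : poch (d+((N-j : ℕ):ℂ)+(n:ℂ)) (j+(N'-n))
        = poch ((d+(n:ℂ))+((N-j : ℕ):ℂ)) j * poch (d+(N:ℂ)+(n:ℂ)) (N'-n) := by
      rw [poch_add]
      have h1 : d+((N-j : ℕ):ℂ)+(n:ℂ) = (d+(n:ℂ))+((N-j : ℕ):ℂ) := by ring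
      rw [h1]
      have h2 : (d+(n:ℂ))+((N-j : ℕ):ℂ)+(j:ℂ) = d+(N:ℂ)+(n:ℂ) := by
        rw [Nat.cast_sub (by omega : j ≤ N)]; ring
      rw [h2]
    rw [hja, hjb, hjc, neg_one_pow_sub_c (by omega : j ≤ N)]
    ring
  have mass' : ∀ n ∈ Finset.range (N'+1),
      ∑ j ∈ Finset.range (N+1),
        ((poch (d-a) n * poch (d-b) n * γ n * poch (d+(N:ℂ)+(n:ℂ)) (N'-n))
          * ((N.choose j : ℂ) * (n.descFactorial j : ℂ)
            * poch ((d+(n:ℂ))+((N-j : ℕ):ℂ)) j * (-1)^(N-j)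
            * poch ((d+(n:ℂ))-a) (N-j) * poch ((d+(n:ℂ))-b) (N-j)))
      = ∑ j ∈ Finset.range (N+1),
          ((-1:ℂ)^N * ((-1)^j * (N.choose j : ℂ) * (n.descFactorial j : ℂ) * γ n
            * poch (d-a) (n+(N-j)) * poch (d-b) (n+(N-j))
            * poch (d+((N-j : ℕ):ℂ)+(n:ℂ)) (j+(N'-n)))) := by
    intro n hn
    exact Finset.sum_congr rfl (fun j hj => mass n hn j hj)
  rw [Finset.sum_congr rfl mass', Finset.sum_comm]
  -- Step 3: per j, reindex the n-sum
  have reindex : ∀ j ∈ Finset.range (N+1),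
      ∑ n ∈ Finset.range (N'+1),
        ((-1:ℂ)^N * ((-1)^j * (N.choose j : ℂ) * (n.descFactorial j : ℂ) * γ n
          * poch (d-a) (n+(N-j)) * poch (d-b) (n+(N-j))
          * poch (d+((N-j : ℕ):ℂ)+(n:ℂ)) (j+(N'-n))))
      = ∑ k ∈ Finset.range (N'+1),
          ((-1:ℂ)^N * ((-1)^j * (N.choose j : ℂ)
            * (poch (d-a) (N+k) * poch (d-b) (N+k) * poch (d+(N:ℂ)+(k:ℂ)) (N'-k)
              * (poch (-(N':ℂ)) (j+k) / (poch (1-(N:ℂ)-(N':ℂ)) (j+k) * (k.factorial:ℂ)))))) := by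
    intro j hj
    rw [Finset.mem_range] at hj
    have stepa : ∑ n ∈ Finset.range (N'+1),
        ((-1:ℂ)^N * ((-1)^j * (N.choose j : ℂ) * (n.descFactorial j : ℂ) * γ n
          * poch (d-a) (n+(N-j)) * poch (d-b) (n+(N-j))
          * poch (d+((N-j : ℕ):ℂ)+(n:ℂ)) (j+(N'-n))))
        = ∑ n ∈ Finset.Ico j (N'+1),
        ((-1:ℂ)^N * ((-1)^j * (N.choose j : ℂ) * (n.descFactorial j : ℂ) * γ n
          * poch (d-a) (n+(N-j)) * poch (d-b) (n+(N-j))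
          * poch (d+((N-j : ℕ):ℂ)+(n:ℂ)) (j+(N'-n)))) := by
      refine (Finset.sum_subset ?_ ?_).symm
      · rw [Finset.range_eq_Ico]
        exact Finset.Ico_subset_Ico (Nat.zero_le j) le_rfl
      · intro x hx1 hx2
        rw [Finset.mem_range] at hx1
        rw [Finset.mem_Ico] at hx2
        have : x.descFactorial j = 0 := Nat.descFactorial_eq_zero_iff_lt.mpr (by omega)
        rw [this]
        simp
    rw [stepa, Finset.sum_Ico_eq_sum_range]
    have stepd : ∑ k ∈ Finset.range (N'+1),
          ((-1:ℂ)^N * ((-1)^j * (N.choose j : ℂ)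
            * (poch (d-a) (N+k) * poch (d-b) (N+k) * poch (d+(N:ℂ)+(k:ℂ)) (N'-k)
              * (poch (-(N':ℂ)) (j+k) / (poch (1-(N:ℂ)-(N':ℂ)) (j+k) * (k.factorial:ℂ))))))
        = ∑ k ∈ Finset.range (N'+1-j),
          ((-1:ℂ)^N * ((-1)^j * (N.choose j : ℂ)
            * (poch (d-a) (N+k) * poch (d-b) (N+k) * poch (d+(N:ℂ)+(k:ℂ)) (N'-k)
              * (poch (-(N':ℂ)) (j+k) / (poch (1-(N:ℂ)-(N':ℂ)) (j+k) * (k.factorial:ℂ)))))) := by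
      refine (Finset.sum_subset (Finset.range_subset_range.mpr (by omega)) ?_).symm
      intro x hx1 hx2
      rw [Finset.mem_range] at hx1
      rw [Finset.mem_range] at hx2
      have hz : poch (-(N':ℂ)) (j+x) = 0 := by
        rw [poch_neg_nat]
        rw [Nat.descFactorial_eq_zero_iff_lt.mpr (by omega : N' < j + x)]
        simp
      rw [hz, zero_div]
      ring
    rw [stepd]
    refine Finset.sum_congr rfl fun k hk => ?_
    rw [Finset.mem_range] at hk
    -- per-k equality
    have l1 : (j+k)+(N-j) = N+k := by omega
    have l2 : j+(N'-(j+k)) = N'-k := by omega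
    have l3 : d+((N-j : ℕ):ℂ)+((j+k : ℕ):ℂ) = d+(N:ℂ)+(k:ℂ) := by
      rw [Nat.cast_sub (by omega : j ≤ N)]
      push_cast
      ring
    have hdF : ((j+k).descFactorial j : ℂ) ≠ 0 :=
      Nat.cast_ne_zero.mpr (fun h => absurd (Nat.descFactorial_eq_zero_iff_lt.mp h) (by omega))
    have hfacid : ((j+k).factorial : ℂ) = ((j+k).descFactorial j : ℂ) * (k.factorial : ℂ) := by
      have h1 : (j+k).descFactorial j * k.factorial = (j+k).factorial := by
        rw [Nat.descFactorial_eq_factorial_mul_choose]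
        have h2 := Nat.choose_mul_factorial_mul_factorial (Nat.le_add_right j k)
        rw [show j+k-j = k by omega] at h2
        calc j.factorial * (j+k).choose j * k.factorial
            = (j+k).choose j * j.factorial * k.factorial := by ring
          _ = (j+k).factorial := h2
      exact_mod_cast (congrArg (fun z : ℕ => (z:ℂ)) h1).symm
    have hγval : ((j+k).descFactorial j : ℂ) * γ (j+k)
        = poch (-(N':ℂ)) (j+k) / (poch (1-(N:ℂ)-(N':ℂ)) (j+k) * (k.factorial:ℂ)) := by
      rw [hγ]
      simp only []
      rw [hfacid]
      rw [mul_div_assoc']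
      rw [show poch (1-(N:ℂ)-(N':ℂ)) (j+k) * (((j+k).descFactorial j : ℂ) * (k.factorial:ℂ))
          = ((j+k).descFactorial j : ℂ) * (poch (1-(N:ℂ)-(N':ℂ)) (j+k) * (k.factorial:ℂ)) by ring]
      exact mul_div_mul_left _ _ hdF
    calc (-1:ℂ)^N * ((-1)^j * (N.choose j : ℂ) * ((j+k).descFactorial j : ℂ) * γ (j+k)
          * poch (d-a) ((j+k)+(N-j)) * poch (d-b) ((j+k)+(N-j))
          * poch (d+((N-j : ℕ):ℂ)+((j+k : ℕ):ℂ)) (j+(N'-(j+k))))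
        = (-1:ℂ)^N * ((-1)^j * (N.choose j : ℂ)
          * (poch (d-a) (N+k) * poch (d-b) (N+k) * poch (d+(N:ℂ)+(k:ℂ)) (N'-k)
            * (((j+k).descFactorial j : ℂ) * γ (j+k)))) := by
          rw [l1, l2, l3]
          ring
      _ = _ := by rw [hγval]
  rw [Finset.sum_congr rfl reindex, Finset.sum_comm]
  -- Step 4: the k-sum collapses to k = N'
  have inner_j : ∀ k ∈ Finset.range (N'+1),
      ∑ j ∈ Finset.range (N+1),
          ((-1:ℂ)^N * ((-1)^j * (N.choose j : ℂ)
            * (poch (d-a) (N+k) * poch (d-b) (N+k) * poch (d+(N:ℂ)+(k:ℂ)) (N'-k)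
              * (poch (-(N':ℂ)) (j+k) / (poch (1-(N:ℂ)-(N':ℂ)) (j+k) * (k.factorial:ℂ))))))
      = ((-1:ℂ)^N * poch (d-a) (N+k) * poch (d-b) (N+k) * poch (d+(N:ℂ)+(k:ℂ)) (N'-k)
          * ((k.factorial:ℂ))⁻¹)
        * ∑ j ∈ Finset.range (N+1), ((-1:ℂ)^j * (N.choose j : ℂ)
            * (poch (-(N':ℂ)) (j+k) / poch (1-(N:ℂ)-(N':ℂ)) (j+k))) := by
    intro k hk
    rw [Finset.mul_sum]
    refine Finset.sum_congr rfl fun j hj => ?_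
    rw [show poch (-(N':ℂ)) (j+k) / (poch (1-(N:ℂ)-(N':ℂ)) (j+k) * (k.factorial:ℂ))
        = (poch (-(N':ℂ)) (j+k) / poch (1-(N:ℂ)-(N':ℂ)) (j+k)) * ((k.factorial:ℂ))⁻¹ by
      rw [← div_div, div_eq_mul_inv]]
    ring
  rw [Finset.sum_congr rfl inner_j]
  have collapse : ∀ k ∈ Finset.range (N'+1), k ≠ N' →
      ((-1:ℂ)^N * poch (d-a) (N+k) * poch (d-b) (N+k) * poch (d+(N:ℂ)+(k:ℂ)) (N'-k)
          * ((k.factorial:ℂ))⁻¹)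
        * (∑ j ∈ Finset.range (N+1), ((-1:ℂ)^j * (N.choose j : ℂ)
            * (poch (-(N':ℂ)) (j+k) / poch (1-(N:ℂ)-(N':ℂ)) (j+k)))) = 0 := by
    intro k hk hkne
    rw [Finset.mem_range] at hk
    rw [hk_vanish N N' k hN (by omega), mul_zero]
  rw [Finset.sum_eq_single N' collapse (fun h => absurd (Finset.self_mem_range_succ N') h)]
  -- evaluate j-sum at k = N'
  have jsum : ∑ j ∈ Finset.range (N+1), ((-1:ℂ)^j * (N.choose j : ℂ)
      * (poch (-(N':ℂ)) (j+N') / poch (1-(N:ℂ)-(N':ℂ)) (j+N')))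
      = poch (-(N':ℂ)) N' / poch (1-(N:ℂ)-(N':ℂ)) N' := by
    have single : ∀ j ∈ Finset.range (N+1), j ≠ 0 →
        (-1:ℂ)^j * (N.choose j : ℂ)
          * (poch (-(N':ℂ)) (j+N') / poch (1-(N:ℂ)-(N':ℂ)) (j+N')) = 0 := by
      intro j hj hjne
      have hz : poch (-(N':ℂ)) (j+N') = 0 := by
        rw [poch_neg_nat]
        rw [Nat.descFactorial_eq_zero_iff_lt.mpr (by omega : N' < j + N')]
        simp
      rw [hz, zero_div]
      ring
    rw [Finset.sum_eq_single 0 single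
      (fun h => absurd (Finset.mem_range.mpr (by omega : 0 < N + 1)) h)]
    simp
  rw [jsum, Nat.sub_self]
  rw [poch_zero]
  rw [div_eq_mul_inv (poch (-(N':ℂ)) N'), div_eq_mul_inv, mul_inv]
  ring

theorem kdf_summation_fi2 (N N' : ℕ) (hN : 0 < N) (hN' : 0 < N') (a b d : ℂ)
    (hd : poch d (N + N') ≠ 0)
    (he : poch (1 + a + b - N - d) N ≠ 0) :
    (∑ m ∈ Finset.range (N + 1), ∑ n ∈ Finset.range (N' + 1),
        poch a m * poch b m * poch (-(N : ℂ)) m *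
            poch (d - a) n * poch (d - b) n * poch (-(N' : ℂ)) n /
          (poch d (m + n) * poch (1 + a + b - N - d) m *
            poch (1 - (N : ℂ) - (N' : ℂ)) n *
            (Nat.factorial m : ℂ) * (Nat.factorial n : ℂ))) =
      poch (d - a) (N + N') * poch (d - b) (N + N') /
        (poch d (N + N') * poch (d - a - b) N * poch (N : ℂ) N') := by
  have hGn : ∀ n : ℕ, n ≤ N' → poch (1-(N:ℂ)-(N':ℂ)) n ≠ 0 := by
    intro n hn
    have cast1 : (1:ℂ)-(N:ℂ)-(N':ℂ) = -(((N+N'-1 : ℕ)):ℂ) := by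
      push_cast [Nat.cast_sub (show 1 ≤ N + N' by omega)]
      ring
    rw [cast1, poch_neg_nat]
    refine mul_ne_zero (pow_ne_zero _ (by norm_num)) ?_
    exact Nat.cast_ne_zero.mpr (fun h => absurd (Nat.descFactorial_eq_zero_iff_lt.mp h) (by omega))
  have hfac : ∀ k : ℕ, ((k.factorial : ℕ) : ℂ) ≠ 0 :=
    fun k => Nat.cast_ne_zero.mpr (Nat.factorial_ne_zero k)
  -- per-term rewriting
  have perterm : ∀ m ∈ Finset.range (N+1), ∀ n ∈ Finset.range (N'+1),
      poch a m * poch b m * poch (-(N : ℂ)) m *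
          poch (d - a) n * poch (d - b) n * poch (-(N' : ℂ)) n /
        (poch d (m + n) * poch (1 + a + b - N - d) m *
          poch (1 - (N : ℂ) - (N' : ℂ)) n *
          (Nat.factorial m : ℂ) * (Nat.factorial n : ℂ))
      = ((-1)^m * (N.choose m : ℂ) * poch a m * poch b m * poch (d-a) n * poch (d-b) n
          * (poch (-(N':ℂ)) n / (poch (1-(N:ℂ)-(N':ℂ)) n * (n.factorial:ℂ)))
          * poch (d+m+n) (N+N'-(m+n)) * poch (1+a+b-(N:ℂ)-d+m) (N-m))
        / (poch d (N + N') * poch (1 + a + b - N - d) N) := by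
    intro m hm n hn
    rw [Finset.mem_range] at hm hn
    have hsD : poch d (N+N') = poch d (m+n) * poch (d+(m:ℂ)+(n:ℂ)) (N+N'-(m+n)) := by
      have h0 := poch_add d (m+n) (N+N'-(m+n))
      rw [show (m+n)+(N+N'-(m+n)) = N+N' by omega] at h0
      rw [h0]
      have : (((m+n : ℕ)):ℂ) = (m:ℂ)+(n:ℂ) := by push_cast; ring
      rw [this, add_assoc]
    have hsE : poch (1+a+b-(N:ℂ)-d) N = poch (1+a+b-(N:ℂ)-d) m * poch (1+a+b-(N:ℂ)-d+(m:ℂ)) (N-m) := by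
      have h0 := poch_add (1+a+b-(N:ℂ)-d) m (N-m)
      rw [show m+(N-m) = N by omega] at h0
      exact h0
    have hP1 : poch d (m+n) ≠ 0 := fun h => hd (by rw [hsD, h, zero_mul])
    have hR1 : poch (d+(m:ℂ)+(n:ℂ)) (N+N'-(m+n)) ≠ 0 := fun h => hd (by rw [hsD, h, mul_zero])
    have hE1 : poch (1+a+b-(N:ℂ)-d) m ≠ 0 := fun h => he (by rw [hsE, h, zero_mul])
    have hR2 : poch (1+a+b-(N:ℂ)-d+(m:ℂ)) (N-m) ≠ 0 := fun h => he (by rw [hsE, h, mul_zero])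
    have hG := hGn n (by omega)
    have hNegN : poch (-(N:ℂ)) m = (-1)^m * ((m.factorial : ℕ):ℂ) * ((N.choose m : ℕ):ℂ) := by
      rw [poch_neg_nat, Nat.descFactorial_eq_factorial_mul_choose]
      push_cast
      ring
    have hDL : poch d (m+n) * poch (1+a+b-(N:ℂ)-d) m * poch (1-(N:ℂ)-(N':ℂ)) n
        * (m.factorial:ℂ) * (n.factorial:ℂ) ≠ 0 :=
      mul_ne_zero (mul_ne_zero (mul_ne_zero (mul_ne_zero hP1 hE1) hG) (hfac m)) (hfac n)
    have hDE : poch d (N+N') * poch (1+a+b-(N:ℂ)-d) N ≠ 0 := mul_ne_zero hd he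
    rw [div_eq_div_iff hDL hDE]
    rw [hNegN, hsD, hsE]
    have hz : poch (-(N':ℂ)) n / (poch (1-(N:ℂ)-(N':ℂ)) n * (n.factorial:ℂ))
        * (poch (1-(N:ℂ)-(N':ℂ)) n * (n.factorial:ℂ)) = poch (-(N':ℂ)) n :=
      div_mul_cancel₀ _ (mul_ne_zero hG (hfac n))
    linear_combination (-((-1:ℂ)^m * ((N.choose m : ℕ):ℂ) * poch a m * poch b m
      * poch (d-a) n * poch (d-b) n * poch (d+(m:ℂ)+(n:ℂ)) (N+N'-(m+n))
      * poch (1+a+b-(N:ℂ)-d+(m:ℂ)) (N-m) * poch d (m+n) * poch (1+a+b-(N:ℂ)-d) m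
      * ((m.factorial : ℕ):ℂ))) * hz
  rw [Finset.sum_congr rfl (fun m hm => Finset.sum_congr rfl (fun n hn => perterm m hm n hn))]
  have sumdiv : ∑ m ∈ Finset.range (N+1), ∑ n ∈ Finset.range (N'+1),
      (((-1)^m * (N.choose m : ℂ) * poch a m * poch b m * poch (d-a) n * poch (d-b) n
          * (poch (-(N':ℂ)) n / (poch (1-(N:ℂ)-(N':ℂ)) n * (n.factorial:ℂ)))
          * poch (d+m+n) (N+N'-(m+n)) * poch (1+a+b-(N:ℂ)-d+m) (N-m))
        / (poch d (N + N') * poch (1 + a + b - N - d) N))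
      = (∑ m ∈ Finset.range (N+1), ∑ n ∈ Finset.range (N'+1),
          ((-1)^m * (N.choose m : ℂ) * poch a m * poch b m * poch (d-a) n * poch (d-b) n
            * (poch (-(N':ℂ)) n / (poch (1-(N:ℂ)-(N':ℂ)) n * (n.factorial:ℂ)))
            * poch (d+m+n) (N+N'-(m+n)) * poch (1+a+b-(N:ℂ)-d+m) (N-m)))
        / (poch d (N + N') * poch (1 + a + b - N - d) N) := by
    rw [Finset.sum_div]
    refine Finset.sum_congr rfl fun m hm => ?_
    rw [Finset.sum_div]
  rw [sumdiv, pp_eval N N' hN hN' a b d]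
  -- final constants
  have c1 : poch (-(N':ℂ)) N' = (-1)^N' * ((N'.factorial : ℕ):ℂ) := by
    rw [poch_neg_nat, Nat.descFactorial_self]
  have c2 : poch (1-(N:ℂ)-(N':ℂ)) N' = (-1)^N' * poch ((N:ℕ):ℂ) N' := by
    rw [poch_reverse (1-(N:ℂ)-(N':ℂ)) N']
    rw [show (1:ℂ)-(1-(N:ℂ)-(N':ℂ))-(N':ℂ) = ((N:ℕ):ℂ) by push_cast; ring]
  have c3 : poch (1+a+b-(N:ℂ)-d) N = (-1)^N * poch (d-a-b) N := by
    rw [poch_reverse (1+a+b-(N:ℂ)-d) N]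
    rw [show (1:ℂ)-(1+a+b-(N:ℂ)-d)-(N:ℂ) = d-a-b by push_cast; ring]
  have hpd : poch (d-a-b) N ≠ 0 := by
    intro h
    apply he
    rw [c3, h, mul_zero]
  have hpN : poch ((N:ℕ):ℂ) N' ≠ 0 := by
    rw [poch]
    refine Finset.prod_ne_zero_iff.mpr fun i hi => ?_
    have : ((N:ℕ):ℂ) + (i:ℂ) = ((N+i : ℕ):ℂ) := by push_cast; ring
    rw [this]
    exact Nat.cast_ne_zero.mpr (by omega)
  have hsgnN : ((-1:ℂ))^N ≠ 0 := pow_ne_zero _ (by norm_num)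
  have hsgnN' : ((-1:ℂ))^N' ≠ 0 := pow_ne_zero _ (by norm_num)
  -- rewrite RHS denominator in terms of E
  have c3' : poch (d-a-b) N = (-1)^N * poch (1+a+b-(N:ℂ)-d) N := by
    rw [poch_reverse (d-a-b) N]
    rw [show (1:ℂ)-(d-a-b)-(N:ℂ) = 1+a+b-(N:ℂ)-d by push_cast; ring]
  have e1 : poch (-(N':ℂ)) N' / (poch (1-(N:ℂ)-(N':ℂ)) N' * ((N'.factorial : ℕ):ℂ))
      = 1 / poch ((N:ℕ):ℂ) N' := by
    rw [c1, c2, mul_assoc, mul_div_mul_left _ _ hsgnN',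
      mul_comm (poch ((N:ℕ):ℂ) N') ((N'.factorial : ℕ):ℂ), ← div_div,
      div_self (hfac N'), one_div]
  rw [e1, c3']
  have h1 : poch d (N+N') * ((-1:ℂ)^N * poch (1+a+b-(N:ℂ)-d) N) * poch ((N:ℕ):ℂ) N' ≠ 0 :=
    mul_ne_zero (mul_ne_zero hd (mul_ne_zero hsgnN he)) hpN
  have h2 : poch d (N+N') * poch (1+a+b-(N:ℂ)-d) N ≠ 0 := mul_ne_zero hd he
  rw [div_eq_div_iff h2 h1]
  have hp : (1 / poch ((N:ℕ):ℂ) N') * poch ((N:ℕ):ℂ) N' = 1 :=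
    one_div_mul_cancel hpN
  have hs : ((-1:ℂ))^N * (-1)^N = 1 := by
    rw [← pow_add]; exact Even.neg_one_pow ⟨N, by ring⟩
  linear_combination (poch (d-a) (N+N') * poch (d-b) (N+N') * poch d (N+N')
      * poch (1+a+b-(N:ℂ)-d) N * ((-1:ℂ)^N * (-1)^N)) * hp
    + (poch (d-a) (N+N') * poch (d-b) (N+N') * poch d (N+N')
      * poch (1+a+b-(N:ℂ)-d) N) * hs
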